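/- arXiv:2412.07461 — 3 statements merged into one kernel-verified Lean document; each statement's English description precedes it below -/
import Mathlib

section
/- Let λ^L, λ^C: ℝ → ℝ with λ^L decreasing and λ^C increasing, and suppose there exists c > 0 such that for all q ∈ ℝ and all x ≥ 0, λ^L(q) − λ^L(q+x) + λ^C(q+x) − λ^C(q) ≥ c x. Let Y: [0,∞) → ℝ be continuous, f: [0,∞) → [0,∞) continuous with f(s) = 0 for s > t. If q and \bar{q} are C¹ solutions on [0,∞) of q'(s) = λ^L(q(s)) − λ^C(q(s)) − Y(s) and \bar{q}'(s) = λ^L(\bar{q}(s)) − λ^C(\bar{q}(s)) − Y(s) + f(s) with q(0) = \bar{q}(0), then for all s ≥ t: 0 ≤ \bar{q}(s) − q(s) ≤ (∫₀^t f(u) du) · exp(−c(s − t)). -/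
/-!
Write `g = λᴸ - λᶜ` and `d = q̄ - q`, so that `d' = g q̄ - g q + f` and the gap condition says
`g r - g p ≤ -c (r - p)` for `p ≤ r`. Hence `d' > 0` wherever `d < 0`, so `d` never becomes
negative; once `d ≥ 0` we get `d' ≤ -c d + f`, which gives `d t ≤ ∫₀ᵗ f` on `[0, t]` and,
since `f` vanishes afterwards, Grönwall's inequality `d s ≤ d t · e^{-c (s - t)}` for `s ≥ t`.
-/

open MeasureTheory Set

theorem drift_sub_le_of_gap {lamL lamC : ℝ → ℝ} {c : ℝ}
    (hgap : ∀ p x : ℝ, 0 ≤ x → c * x ≤ lamL p - lamL (p + x) + lamC (p + x) - lamC p)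
    {p r : ℝ} (hpr : p ≤ r) :
    (lamL r - lamC r) - (lamL p - lamC p) ≤ -c * (r - p) := by
  have h := hgap p (r - p) (sub_nonneg.2 hpr)
  rw [add_sub_cancel] at h
  linarith

theorem nonneg_of_deriv_pos_of_neg {d d' : ℝ → ℝ} {a b : ℝ}
    (hd : ∀ x ∈ Icc a b, HasDerivAt d (d' x) x) (ha : 0 ≤ d a)
    (hpos : ∀ x ∈ Ico a b, d x < 0 → 0 < d' x) : ∀ x ∈ Icc a b, 0 ≤ d x := by
  intro x hx
  refine le_of_forall_sub_le fun ε hε => ?_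
  -- `-d` stays below the barrier `ε`: it is strictly decreasing wherever it touches it.
  have hbarrier := image_le_of_deriv_right_lt_deriv_boundary' (f := -d) (f' := fun x => -d' x)
    (B := fun _ => ε) (B' := 0)
    (fun y hy => (hd y hy).continuousAt.continuousWithinAt.neg)
    (fun y hy => (hd y (Ico_subset_Icc_self hy)).neg.hasDerivWithinAt)
    (by simp only [Pi.neg_apply]; linarith) continuousOn_const
    (fun _ _ => hasDerivWithinAt_const _ _ _)
    (fun y hy hyε => by
      have := hpos y hy (by simp only [Pi.neg_apply] at hyε; linarith)
      simp only [Pi.zero_apply]; linarith) hx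
  simp only [Pi.neg_apply] at hbarrier
  linarith

theorem le_mul_exp_of_deriv_le_mul {d d' : ℝ → ℝ} {K a b : ℝ} (hab : a ≤ b)
    (hd : ∀ x ∈ Icc a b, HasDerivAt d (d' x) x) (bound : ∀ x ∈ Ico a b, d' x ≤ K * d x) :
    d b ≤ d a * Real.exp (K * (b - a)) := by
  have h := le_gronwallBound_of_liminf_deriv_right_le (δ := d a) (ε := 0)
    (fun x hx => (hd x hx).continuousAt.continuousWithinAt)
    (fun x hx _ hr => (hd x (Ico_subset_Icc_self hx)).hasDerivWithinAt.liminf_right_slope_le hr)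
    le_rfl (by simpa using bound) b ⟨hab, le_rfl⟩
  rwa [gronwallBound_ε0] at h

theorem Continuous.eq_of_forall_gt_eq {β : Type*} [TopologicalSpace β] [T1Space β]
    {f : ℝ → β} (hf : Continuous f) {t : ℝ} {b : β} (h : ∀ s, t < s → f s = b) {u : ℝ}
    (hu : t ≤ u) : f u = b :=
  (isClosed_singleton.preimage hf).closure_subset_iff.2 (show Ioi t ⊆ f ⁻¹' {b} from h)
    (show u ∈ closure (Ioi t) by rwa [closure_Ioi])

theorem stmt3_general (lamL lamC Y f q qbar : ℝ → ℝ) (c t : ℝ) (hc : 0 < c) (ht : 0 ≤ t)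
    (hgap : ∀ p x : ℝ, 0 ≤ x → c * x ≤ lamL p - lamL (p + x) + lamC (p + x) - lamC p)
    (hf : Continuous f) (hfnn : ∀ s, 0 ≤ f s)
    (hft : ∀ s, t < s → f s = 0)
    (hq : ∀ s, 0 ≤ s → HasDerivAt q (lamL (q s) - lamC (q s) - Y s) s)
    (hqbar : ∀ s, 0 ≤ s → HasDerivAt qbar (lamL (qbar s) - lamC (qbar s) - Y s + f s) s)
    (h0 : q 0 = qbar 0) :
    ∀ s, t ≤ s →
      0 ≤ qbar s - q s ∧
      qbar s - q s ≤ (∫ u in (0:ℝ)..t, f u) * Real.exp (-c * (s - t)) := by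
  set d : ℝ → ℝ := fun u => qbar u - q u
  set d' : ℝ → ℝ := fun u => (lamL (qbar u) - lamC (qbar u)) - (lamL (q u) - lamC (q u)) + f u
  have hd : ∀ u, 0 ≤ u → HasDerivAt d (d' u) u := fun u hu =>
    ((hqbar u hu).sub (hq u hu)).congr_deriv (by simp only [d']; ring)
  have hnn : ∀ u, 0 ≤ u → 0 ≤ d u := fun u hu =>
    nonneg_of_deriv_pos_of_neg (fun x hx => hd x hx.1) (by simp [d, h0])
      (fun x _ hneg => by
        have hlt : qbar x < q x := sub_neg.1 hneg
        have := drift_sub_le_of_gap hgap hlt.le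
        linarith [mul_pos hc (sub_pos.2 hlt), hfnn x]) u ⟨hu, le_rfl⟩
  have hdissip : ∀ u, 0 ≤ u → d' u ≤ -c * d u + f u := fun u hu => by
    have := drift_sub_le_of_gap hgap (sub_nonneg.1 (hnn u hu))
    linarith
  have hdt : d t ≤ ∫ u in (0:ℝ)..t, f u := by
    have h := intervalIntegral.sub_le_integral_of_hasDeriv_right_of_le ht
      (fun x hx => (hd x hx.1).continuousAt.continuousWithinAt)
      (fun x hx => (hd x hx.1.le).hasDerivWithinAt) hf.integrableOn_Icc
      (fun x hx => by linarith [hdissip x hx.1.le, mul_nonneg hc.le (hnn x hx.1.le)])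
    simpa [d, h0] using h
  intro s hts
  have hdecay : d s ≤ d t * Real.exp (-c * (s - t)) :=
    le_mul_exp_of_deriv_le_mul hts (fun x hx => hd x (ht.trans hx.1))
      (fun x hx => by simpa [hf.eq_of_forall_gt_eq hft hx.1] using hdissip x (ht.trans hx.1))
  exact ⟨hnn s (ht.trans hts),
    hdecay.trans (mul_le_mul_of_nonneg_right hdt (Real.exp_pos _).le)⟩

/-- Comparison + Grönwall estimate for the queue with and without a metaorder:
after the forcing `f` (supported in `[0, t]`) stops, the difference of the two
solutions is nonnegative and decays exponentially at rate `c`. -/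
theorem stmt3 (lamL lamC Y f q qbar : ℝ → ℝ) (c t : ℝ) (hc : 0 < c) (ht : 0 ≤ t)
    (hL : Antitone lamL) (hC : Monotone lamC)
    (hgap : ∀ p x : ℝ, 0 ≤ x → c * x ≤ lamL p - lamL (p + x) + lamC (p + x) - lamC p)
    (hY : Continuous Y) (hf : Continuous f) (hfnn : ∀ s, 0 ≤ f s)
    (hft : ∀ s, t < s → f s = 0)
    (hq : ∀ s, 0 ≤ s → HasDerivAt q (lamL (q s) - lamC (q s) - Y s) s)
    (hqbar : ∀ s, 0 ≤ s → HasDerivAt qbar (lamL (qbar s) - lamC (qbar s) - Y s + f s) s)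
    (h0 : q 0 = qbar 0) :
    ∀ s, t ≤ s →
      0 ≤ qbar s - q s ∧
      qbar s - q s ≤ (∫ u in (0:ℝ)..t, f u) * Real.exp (-c * (s - t)) :=
  stmt3_general lamL lamC Y f q qbar c t hc ht hgap hf hfnn hft hq hqbar h0
end

section
/- Under the same assumptions as the previous comparison lemma, for all s ∈ [0, t] one has 0 ≤ \bar{q}(s) − q(s) ≤ ∫₀^s f(u) du. -/
open MeasureTheory Set

/-! Write `Φ = λ^L − λ^C`, which is antitone, and `g = q̄ − q`, so that
`g' = Φ(q̄) − Φ(q) + f`. Wherever `g < 0` we have `Φ(q̄) ≥ Φ(q)`, so `g' ≥ f ≥ 0`: starting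
from `g 0 = 0`, `g` can never become negative. Once `g ≥ 0` we have `Φ(q̄) ≤ Φ(q)`, so
`g' ≤ f` and `g` stays below `∫₀^s f`. -/

theorem nonneg_of_hasDerivAt_nonneg_of_neg {g g' : ℝ → ℝ} {a b : ℝ}
    (hg : ContinuousOn g (Icc a b)) (hg' : ∀ x ∈ Ioo a b, HasDerivAt g (g' x) x)
    (hneg : ∀ x ∈ Ioo a b, g x < 0 → 0 ≤ g' x) (ha : 0 ≤ g a) :
    ∀ x ∈ Icc a b, 0 ≤ g x := by
  intro x hx
  by_contra! hgx
  -- On `(x₁, x]`, with `x₁` the last point before `x` where `g ≥ 0`, `g` is negative, hence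
  -- nondecreasing, which contradicts `g x < 0 ≤ g x₁`.
  set A := Icc a x ∩ {y | 0 ≤ g y}
  have hA_closed : IsClosed A :=
    (hg.mono (Icc_subset_Icc_right hx.2)).preimage_isClosed_of_isClosed isClosed_Icc isClosed_Ici
  have hA_bdd : BddAbove A := ⟨x, fun y hy => hy.1.2⟩
  obtain ⟨⟨hax₁, hx₁x⟩, hgx₁⟩ : sSup A ∈ A :=
    hA_closed.csSup_mem ⟨a, ⟨left_mem_Icc.2 hx.1, ha⟩⟩ hA_bdd
  set x₁ := sSup A
  have hneg_after : ∀ y ∈ Ioc x₁ x, g y < 0 := fun y hy => by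
    by_contra! hgy
    exact hy.1.not_ge (le_csSup hA_bdd ⟨⟨hax₁.trans hy.1.le, hy.2⟩, hgy⟩)
  have hmono : MonotoneOn g (Icc x₁ x) := by
    refine monotoneOn_of_hasDerivWithinAt_nonneg (f' := g') (convex_Icc _ _)
      (hg.mono (Icc_subset_Icc hax₁ hx.2)) (fun y hy => ?_) (fun y hy => ?_) <;>
      rw [interior_Icc] at hy
    · exact (hg' y ⟨hax₁.trans_lt hy.1, hy.2.trans_le hx.2⟩).hasDerivWithinAt
    · exact hneg y ⟨hax₁.trans_lt hy.1, hy.2.trans_le hx.2⟩ (hneg_after y ⟨hy.1, hy.2.le⟩)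
  exact hgx.not_ge (le_trans hgx₁ (hmono (left_mem_Icc.2 hx₁x) (right_mem_Icc.2 hx₁x) hx₁x))

theorem hasDerivAt_sub_of_antitone_drift {Φ Y f q qbar : ℝ → ℝ} {s : ℝ}
    (hq : HasDerivAt q (Φ (q s) - Y s) s) (hqbar : HasDerivAt qbar (Φ (qbar s) - Y s + f s) s) :
    HasDerivAt (fun u => qbar u - q u) (Φ (qbar s) - Φ (q s) + f s) s :=
  (hqbar.sub hq).congr_deriv (by ring)

theorem sub_nonneg_of_antitone_drift {Φ Y f q qbar : ℝ → ℝ} (hΦ : Antitone Φ)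
    (hfnn : ∀ s, 0 ≤ f s) (hq : ∀ s, 0 ≤ s → HasDerivAt q (Φ (q s) - Y s) s)
    (hqbar : ∀ s, 0 ≤ s → HasDerivAt qbar (Φ (qbar s) - Y s + f s) s) (h0 : q 0 = qbar 0)
    {s : ℝ} (hs : 0 ≤ s) : 0 ≤ qbar s - q s := by
  have hderiv x (hx : 0 ≤ x) := hasDerivAt_sub_of_antitone_drift (hq x hx) (hqbar x hx)
  refine nonneg_of_hasDerivAt_nonneg_of_neg (a := 0) (b := s)
    (fun x hx => (hderiv x hx.1).continuousAt.continuousWithinAt)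
    (fun x hx => hderiv x hx.1.le) (fun x _ hx => ?_) (by simp [h0]) s (right_mem_Icc.2 hs)
  have := hΦ (sub_neg.1 hx).le
  linarith [hfnn x]

theorem sub_le_integral_of_antitone_drift {Φ Y f q qbar : ℝ → ℝ} (hΦ : Antitone Φ)
    (hf : Continuous f) (hfnn : ∀ s, 0 ≤ f s) (hq : ∀ s, 0 ≤ s → HasDerivAt q (Φ (q s) - Y s) s)
    (hqbar : ∀ s, 0 ≤ s → HasDerivAt qbar (Φ (qbar s) - Y s + f s) s) (h0 : q 0 = qbar 0)
    {s : ℝ} (hs : 0 ≤ s) : qbar s - q s ≤ ∫ u in (0:ℝ)..s, f u := by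
  have hderiv x (hx : 0 ≤ x) := hasDerivAt_sub_of_antitone_drift (hq x hx) (hqbar x hx)
  have hF x : HasDerivAt (fun v => ∫ u in (0:ℝ)..v, f u) (f x) x :=
    hf.integral_hasStrictDerivAt 0 x |>.hasDerivAt
  refine image_le_of_deriv_right_le_deriv_boundary (a := 0) (b := s)
    (fun x hx => (hderiv x hx.1).continuousAt.continuousWithinAt)
    (fun x hx => (hderiv x hx.1).hasDerivWithinAt) (by simp [h0])
    (fun x _ => (hF x).continuousAt.continuousWithinAt) (fun x _ => (hF x).hasDerivWithinAt)
    (fun x hx => ?_) (right_mem_Icc.2 hs)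
  have := hΦ (sub_nonneg.1 (sub_nonneg_of_antitone_drift hΦ hfnn hq hqbar h0 hx.1))
  linarith

theorem stmt4_general (lamL lamC Y f q qbar : ℝ → ℝ) (t : ℝ)
    (hL : Antitone lamL) (hC : Monotone lamC)
    (hf : Continuous f) (hfnn : ∀ s, 0 ≤ f s)
    (hq : ∀ s, 0 ≤ s → HasDerivAt q (lamL (q s) - lamC (q s) - Y s) s)
    (hqbar : ∀ s, 0 ≤ s → HasDerivAt qbar (lamL (qbar s) - lamC (qbar s) - Y s + f s) s)
    (h0 : q 0 = qbar 0) :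
    ∀ s, 0 ≤ s → s ≤ t →
      0 ≤ qbar s - q s ∧ qbar s - q s ≤ ∫ u in (0:ℝ)..s, f u := by
  have hΦ : Antitone fun p => lamL p - lamC p := fun a b hab => by
    linarith [hL hab, hC hab]
  exact fun s hs _ => ⟨sub_nonneg_of_antitone_drift hΦ hfnn hq hqbar h0 hs,
    sub_le_integral_of_antitone_drift hΦ hf hfnn hq hqbar h0 hs⟩

/-- During the execution of the metaorder, the difference of the two coupled queue
solutions is nonnegative and bounded by the cumulative forcing `∫₀^s f`. -/
theorem stmt4 (lamL lamC Y f q qbar : ℝ → ℝ) (c t : ℝ) (hc : 0 < c) (ht : 0 ≤ t)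
    (hL : Antitone lamL) (hC : Monotone lamC)
    (hgap : ∀ p x : ℝ, 0 ≤ x → c * x ≤ lamL p - lamL (p + x) + lamC (p + x) - lamC p)
    (hY : Continuous Y) (hf : Continuous f) (hfnn : ∀ s, 0 ≤ f s)
    (hft : ∀ s, t < s → f s = 0)
    (hq : ∀ s, 0 ≤ s → HasDerivAt q (lamL (q s) - lamC (q s) - Y s) s)
    (hqbar : ∀ s, 0 ≤ s → HasDerivAt qbar (lamL (qbar s) - lamC (qbar s) - Y s + f s) s)
    (h0 : q 0 = qbar 0) :
    ∀ s, 0 ≤ s → s ≤ t →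
      0 ≤ qbar s - q s ∧ qbar s - q s ≤ ∫ u in (0:ℝ)..s, f u :=
  stmt4_general lamL lamC Y f q qbar t hL hC hf hfnn hq hqbar h0
end

section
/- Let g: ℝ → ℝ be given by g = λ^L − λ^C where λ^L is decreasing and λ^C is increasing. Consider the coupled pure-jump dynamics: q^f and q^g are piecewise-constant càdlàg processes driven by the same Poisson point measures π^L, π^C via indicator thinning with intensities λ^L(q^{f/g}_{s−}) and λ^C(q^{f/g}_{s−}), plus downward jumps from a common process N and from independent processes N^f, N^g respectively. Then on any interval containing no jump of N^f or N^g, the process t ↦ |q^f_t − q^g_t| is non-increasing, and for all t ≥ 0, |q^f_t − q^g_t| ≤ |q^f_0 − q^g_0| + N^f_t + N^g_t. -/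
lemma aux_coupling (x y a b : ℤ) (ha : a = 0 ∨ a = 1) (hb : b = 0 ∨ b = 1)
    (h1 : x ≤ y → b ≤ a) (h2 : y ≤ x → a ≤ b) : |x + a - (y + b)| ≤ |x - y| := by
  rcases abs_cases (x + a - (y + b)) with ⟨h, _⟩ | ⟨h, _⟩ <;>
    rcases abs_cases (x - y) with ⟨h', _⟩ | ⟨h', _⟩ <;> omega

/-- Pathwise coupling lemma for the two queues, in a discrete-event formulation.
Events are enumerated by `n : ℕ`. At each event either: a limit order arrives
(thinned by the same mark `z` for the two coupled queues `qf`, `qg`, with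
decreasing intensity `lamL`), a cancel order arrives (same mark `z`, increasing
intensity `lamC`), a common market order `N` hits both queues, or a jump of `Nf`
(resp. `Ng`) hits only `qf` (resp. `qg`).  Then `|qf - qg|` does not increase at
events which are not jumps of `Nf` or `Ng`, and for all `n`,
`|qf_n - qg_n| ≤ |qf_0 - qg_0| + Nf_n + Ng_n` (with `Nf_0 = Ng_0 = 0` subtracted). -/
theorem stmt11 (lamL lamC : ℤ → ℝ) (hL : Antitone lamL) (hC : Monotone lamC)
    (qf qg : ℕ → ℤ) (N Nf Ng : ℕ → ℕ)
    (hstep : ∀ n,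
      (∃ z : ℝ, qf (n+1) = qf n + (if z ≤ lamL (qf n) then 1 else 0) ∧
                qg (n+1) = qg n + (if z ≤ lamL (qg n) then 1 else 0) ∧
                N (n+1) = N n ∧ Nf (n+1) = Nf n ∧ Ng (n+1) = Ng n) ∨
      (∃ z : ℝ, qf (n+1) = qf n - (if z ≤ lamC (qf n) then 1 else 0) ∧
                qg (n+1) = qg n - (if z ≤ lamC (qg n) then 1 else 0) ∧
                N (n+1) = N n ∧ Nf (n+1) = Nf n ∧ Ng (n+1) = Ng n) ∨
      (qf (n+1) = qf n - 1 ∧ qg (n+1) = qg n - 1 ∧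
        N (n+1) = N n + 1 ∧ Nf (n+1) = Nf n ∧ Ng (n+1) = Ng n) ∨
      (qf (n+1) = qf n - 1 ∧ qg (n+1) = qg n ∧
        N (n+1) = N n ∧ Nf (n+1) = Nf n + 1 ∧ Ng (n+1) = Ng n) ∨
      (qf (n+1) = qf n ∧ qg (n+1) = qg n - 1 ∧
        N (n+1) = N n ∧ Nf (n+1) = Nf n ∧ Ng (n+1) = Ng n + 1)) :
    (∀ n, Nf (n+1) = Nf n → Ng (n+1) = Ng n →
      |qf (n+1) - qg (n+1)| ≤ |qf n - qg n|) ∧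
    (∀ n, |qf n - qg n| ≤ |qf 0 - qg 0| + ((Nf n : ℤ) - (Nf 0 : ℤ)) + ((Ng n : ℤ) - (Ng 0 : ℤ))) := by
  have key : ∀ n, |qf (n+1) - qg (n+1)| ≤
      |qf n - qg n| + ((Nf (n+1) : ℤ) - Nf n) + ((Ng (n+1) : ℤ) - Ng n) := by
    intro n
    rcases hstep n with ⟨z, hf, hg, _, h4, h5⟩ | ⟨z, hf, hg, _, h4, h5⟩ |
      ⟨hf, hg, _, h4, h5⟩ | ⟨hf, hg, _, h4, h5⟩ | ⟨hf, hg, _, h4, h5⟩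
    · rw [hf, hg, h4, h5]
      have := aux_coupling (qf n) (qg n)
        (if z ≤ lamL (qf n) then 1 else 0) (if z ≤ lamL (qg n) then 1 else 0)
        (by split <;> simp) (by split <;> simp)
        (fun h => by
          have := hL h
          split_ifs with h1 h2 <;> simp_all <;> linarith)
        (fun h => by
          have := hL h
          split_ifs with h1 h2 <;> simp_all <;> linarith)
      omega
    · rw [hf, hg, h4, h5]
      have := aux_coupling (qg n) (qf n)
        (if z ≤ lamC (qf n) then 1 else 0) (if z ≤ lamC (qg n) then 1 else 0)
        (by split <;> simp) (by split <;> simp)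
        (fun h => by
          have := hC h
          split_ifs with h1 h2 <;> simp_all <;> linarith)
        (fun h => by
          have := hC h
          split_ifs with h1 h2 <;> simp_all <;> linarith)
      rw [show qf n - (if z ≤ lamC (qf n) then (1:ℤ) else 0) -
          (qg n - (if z ≤ lamC (qg n) then (1:ℤ) else 0)) =
          -(qg n + (if z ≤ lamC (qf n) then (1:ℤ) else 0) -
            (qf n + (if z ≤ lamC (qg n) then (1:ℤ) else 0))) by ring,
        abs_neg, show |qf n - qg n| = |qg n - qf n| from (abs_sub_comm _ _)]
      omega
    · rw [hf, hg, h4, h5]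
      have h : qf n - 1 - (qg n - 1) = qf n - qg n := by ring
      rw [h]
      omega
    · rw [hf, hg, h4, h5]
      have := abs_sub_abs_le_abs_sub (qf n - 1 - qg n) (qf n - qg n)
      have : |qf n - 1 - qg n| ≤ |qf n - qg n| + 1 := by
        calc |qf n - 1 - qg n| = |(qf n - qg n) + (-1)| := by ring_nf
          _ ≤ |qf n - qg n| + |(-1 : ℤ)| := abs_add_le _ _
          _ = |qf n - qg n| + 1 := by norm_num
      push_cast
      omega
    · rw [hf, hg, h4, h5]
      have : |qf n - (qg n - 1)| ≤ |qf n - qg n| + 1 := by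
        calc |qf n - (qg n - 1)| = |(qf n - qg n) + 1| := by ring_nf
          _ ≤ |qf n - qg n| + |(1 : ℤ)| := abs_add_le _ _
          _ = |qf n - qg n| + 1 := by norm_num
      push_cast
      omega
  constructor
  · intro n hNf hNg
    have := key n
    rw [hNf, hNg] at this
    omega
  · intro n
    induction n with
    | zero => omega
    | succ n ih =>
      have := key n
      have hf : (Nf n : ℤ) ≤ Nf (n+1) := by
        rcases hstep n with ⟨_, _, _, _, h, _⟩ | ⟨_, _, _, _, h, _⟩ |
          ⟨_, _, _, h, _⟩ | ⟨_, _, _, h, _⟩ | ⟨_, _, _, h, _⟩ <;> omega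
      have hg : (Ng n : ℤ) ≤ Ng (n+1) := by
        rcases hstep n with ⟨_, _, _, _, _, h⟩ | ⟨_, _, _, _, _, h⟩ |
          ⟨_, _, _, _, h⟩ | ⟨_, _, _, _, h⟩ | ⟨_, _, _, _, h⟩ <;> omega
      omega
end
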